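/- Fix G ∈ ℝ and U ∈ PSym(3). The Becker energy for Poisson number ν = 0, W(X) = 2G·( tr( X·(log X − 1) ) + 3 ), considered as a function of symmetric positive definite matrices X, is Fréchet differentiable at U with derivative H ↦ 2G · tr( log(U) · H ). In particular the Biot stress 2G·log(U) is the gradient of W with respect to U (Becker's law is hyperelastic when Λ = 0), and W(1) = 0. -/

import Mathlib

open Matrix

attribute [local instance]
  Matrix.frobeniusNormedAddCommGroup Matrix.frobeniusNormedSpace

/-- The principal matrix logarithm of a symmetric (positive definite) matrix, obtained by
applying the real logarithm to the eigenvalues in a spectral decomposition (junk value `0`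
on non-Hermitian input). -/
noncomputable def matLog (A : Matrix (Fin 3) (Fin 3) ℝ) : Matrix (Fin 3) (Fin 3) ℝ :=
  if hA : A.IsHermitian then hA.cfc Real.log else 0

/-- The Becker energy for Poisson number `ν = 0`:
`W(X) = 2G·(tr(X·(log X − 1)) + 3)`. -/
noncomputable def beckerEnergy (G : ℝ) (X : Matrix (Fin 3) (Fin 3) ℝ) : ℝ :=
  (2 * G) * ((X * (matLog X - 1)).trace + 3)

open Topology

/-! With `φ t = t log t - t` the energy is `W X = 2G (tr φ(X) + 3)`, and `φ' = log`. Write `U`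
and `X` in orthonormal eigenbases, with eigenvalues `λᵢ`, `μⱼ`, and let `wᵢⱼ ≥ 0` be the squared
entries of the orthogonal change of basis. Then the first-order remainder
`tr φ(X) - tr φ(U) - tr (log U (X - U))` and `‖X - U‖²` are the `w`-weighted sums of
`φ(μⱼ) - φ(λᵢ) - φ'(λᵢ)(μⱼ - λᵢ)` and of `(μⱼ - λᵢ)²`. The scalar Bregman divergence of `φ` lies
between `0` and `(μ - λ)² / λ`, so the remainder is at most `2|G| ‖X - U‖² / min λ`, which is
`o(‖X - U‖)`. -/

lemma Matrix.frobenius_norm_sq_eq_trace_transpose_mul {m n : Type*} [Fintype m] [Fintype n]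
    (M : Matrix m n ℝ) : ‖M‖ ^ 2 = (Mᵀ * M).trace := by
  rw [frobenius_norm_def, ← Real.sqrt_eq_rpow, Real.sq_sqrt (by positivity), Finset.sum_comm]
  simp only [trace, diag, mul_apply, transpose_apply, Real.rpow_two, Real.norm_eq_abs, sq,
    abs_mul_abs_self]

lemma Matrix.trace_diagonal_mul_mul_diagonal_mul_transpose {n : Type*} [Fintype n] [DecidableEq n]
    (d e : n → ℝ) (O : Matrix n n ℝ) :
    (diagonal d * O * diagonal e * Oᵀ).trace = ∑ i, ∑ j, O i j ^ 2 * (d i * e j) := by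
  simp only [trace, diag, mul_apply, diagonal_apply, transpose_apply, ite_mul, mul_ite,
    zero_mul, mul_zero, Finset.sum_ite_eq, Finset.sum_ite_eq', Finset.mem_univ, if_true]
  exact Finset.sum_congr rfl fun i _ => Finset.sum_congr rfl fun j _ => by ring

namespace Matrix.IsHermitian

variable {n : Type*} [Fintype n] [DecidableEq n] {A B : Matrix n n ℝ}

lemma cfc_mul (hA : A.IsHermitian) (f g : ℝ → ℝ) :
    hA.cfc f * hA.cfc g = hA.cfc (fun x => f x * g x) := by
  simp only [IsHermitian.cfc, ← map_mul, diagonal_mul_diagonal]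
  rfl

lemma cfc_sub (hA : A.IsHermitian) (f g : ℝ → ℝ) :
    hA.cfc f - hA.cfc g = hA.cfc (fun x => f x - g x) := by
  simp only [IsHermitian.cfc, ← map_sub, diagonal_sub]
  rfl

lemma cfc_const_mul (hA : A.IsHermitian) (c : ℝ) (f : ℝ → ℝ) :
    hA.cfc (fun x => c * f x) = c • hA.cfc f := by
  simp only [IsHermitian.cfc, ← map_smul, ← diagonal_smul]
  rfl

lemma cfc_id (hA : A.IsHermitian) : hA.cfc id = A :=
  hA.spectral_theorem.symm

lemma cfc_const_one (hA : A.IsHermitian) : hA.cfc (fun _ => 1) = 1 := by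
  simp only [IsHermitian.cfc]
  exact (congrArg _ diagonal_one).trans (map_one _)

noncomputable def eigenOverlap (hA : A.IsHermitian) (hB : B.IsHermitian) (i j : n) : ℝ :=
  ((star (hA.eigenvectorUnitary : Matrix n n ℝ) * hB.eigenvectorUnitary) i j) ^ 2

lemma eigenOverlap_nonneg (hA : A.IsHermitian) (hB : B.IsHermitian) (i j : n) :
    0 ≤ eigenOverlap hA hB i j :=
  sq_nonneg _

lemma trace_cfc_mul_cfc (hA : A.IsHermitian) (hB : B.IsHermitian) (f g : ℝ → ℝ) :
    (hA.cfc f * hB.cfc g).trace =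
      ∑ i, ∑ j, eigenOverlap hA hB i j * (f (hA.eigenvalues i) * g (hB.eigenvalues j)) := by
  set P : Matrix n n ℝ := (hA.eigenvectorUnitary : Matrix n n ℝ)
  set Q : Matrix n n ℝ := (hB.eigenvectorUnitary : Matrix n n ℝ)
  have hO : (star P * Q)ᵀ = star Q * P := by
    rw [← conjTranspose_eq_transpose_of_trivial, ← star_eq_conjTranspose, star_mul, star_star]
  calc (hA.cfc f * hB.cfc g).trace
      = (diagonal (f ∘ hA.eigenvalues) * (star P * Q) * diagonal (g ∘ hB.eigenvalues)
          * (star P * Q)ᵀ).trace := by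
        rw [hO, IsHermitian.cfc, IsHermitian.cfc, Unitary.conjStarAlgAut_apply,
          Unitary.conjStarAlgAut_apply, RCLike.ofReal_real_eq_id]
        simp only [mul_assoc]
        rw [trace_mul_comm]
        simp only [mul_assoc]
        rfl
    _ = _ := by
        rw [trace_diagonal_mul_mul_diagonal_mul_transpose]
        rfl

lemma trace_cfc_bregman_eq_sum (hA : A.IsHermitian) (hB : B.IsHermitian) (f g : ℝ → ℝ) :
    (hB.cfc f).trace - (hA.cfc f).trace - (hA.cfc g * (B - A)).trace =
      ∑ i, ∑ j, eigenOverlap hA hB i j * (f (hB.eigenvalues j) - f (hA.eigenvalues i)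
        - g (hA.eigenvalues i) * (hB.eigenvalues j - hA.eigenvalues i)) := by
  -- each single trace becomes a double sum by inserting `cfc 1 = 1` of the other matrix
  have hfB : (hB.cfc f).trace = (hA.cfc (fun _ => 1) * hB.cfc f).trace := by
    rw [cfc_const_one, one_mul]
  have hfA : (hA.cfc f).trace = (hA.cfc f * hB.cfc (fun _ => 1)).trace := by
    rw [cfc_const_one, mul_one]
  have hg : hA.cfc g * (B - A) =
      hA.cfc g * hB.cfc id - hA.cfc (fun x => g x * id x) * hB.cfc (fun _ => 1) := by
    rw [cfc_const_one, mul_one, ← cfc_mul, cfc_id, cfc_id, mul_sub]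
  rw [hfB, hfA, hg, trace_sub]
  simp only [trace_cfc_mul_cfc, ← Finset.sum_sub_distrib]
  exact Finset.sum_congr rfl fun i _ => Finset.sum_congr rfl fun j _ => by simp only [id]; ring

lemma frobenius_norm_sub_sq_eq_sum (hA : A.IsHermitian) (hB : B.IsHermitian) :
    ‖B - A‖ ^ 2 =
      ∑ i, ∑ j, eigenOverlap hA hB i j * (hB.eigenvalues j - hA.eigenvalues i) ^ 2 := by
  have hBA : (B - A)ᵀ = B - A := by
    rw [← conjTranspose_eq_transpose_of_trivial]
    exact hB.sub hA
  have key := trace_cfc_bregman_eq_sum hA hB (fun x => id x * id x) (fun x => 2 * id x)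
  rw [← cfc_mul, ← cfc_mul, cfc_const_mul, cfc_id, cfc_id] at key
  rw [frobenius_norm_sq_eq_trace_transpose_mul, hBA]
  calc ((B - A) * (B - A)).trace
      = (B * B).trace - (A * A).trace - ((2 : ℝ) • A * (B - A)).trace := by
        simp only [sub_mul, mul_sub, smul_mul_assoc, trace_sub, trace_smul, smul_eq_mul]
        rw [trace_mul_comm B A]
        ring
    _ = _ := by
        rw [key]
        refine Finset.sum_congr rfl fun i _ => Finset.sum_congr rfl fun j _ => ?_
        simp only [id]
        ring

end Matrix.IsHermitian

lemma bregman_mul_log_nonneg {a b : ℝ} (ha : 0 < a) (hb : 0 < b) :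
    0 ≤ b * Real.log b - b - (a * Real.log a - a) - Real.log a * (b - a) := by
  have h := Real.log_le_sub_one_of_pos (div_pos ha hb)
  rw [Real.log_div ha.ne' hb.ne'] at h
  have hab : b * (a / b - 1) = a - b := by field_simp
  linarith [mul_le_mul_of_nonneg_left h hb.le]

lemma bregman_mul_log_le {a b : ℝ} (ha : 0 < a) (hb : 0 < b) :
    b * Real.log b - b - (a * Real.log a - a) - Real.log a * (b - a) ≤ (b - a) ^ 2 / a := by
  have h := Real.log_le_sub_one_of_pos (div_pos hb ha)
  rw [Real.log_div hb.ne' ha.ne'] at h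
  have hab : b * (b / a - 1) - b + a = (b - a) ^ 2 / a := by field_simp; ring
  linarith [mul_le_mul_of_nonneg_left h hb.le]

lemma matLog_eq_cfc {A : Matrix (Fin 3) (Fin 3) ℝ} (hA : A.IsHermitian) :
    matLog A = hA.cfc Real.log :=
  dif_pos hA

lemma matLog_one : matLog 1 = 0 := by
  rw [matLog_eq_cfc isHermitian_one, ← IsHermitian.cfc_eq, ← map_one (algebraMap ℝ _),
    cfc_algebraMap, Real.log_one, map_zero]

lemma beckerEnergy_one (G : ℝ) : beckerEnergy G 1 = 0 := by
  rw [beckerEnergy, matLog_one, one_mul, zero_sub, trace_neg, trace_one]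
  norm_num

lemma mul_matLog_sub_one_eq_cfc {A : Matrix (Fin 3) (Fin 3) ℝ} (hA : A.IsHermitian) :
    A * (matLog A - 1) = hA.cfc (fun t => t * Real.log t - t) := by
  rw [matLog_eq_cfc hA, ← hA.cfc_const_one, hA.cfc_sub]
  conv_lhs => arg 1; rw [← hA.cfc_id]
  rw [hA.cfc_mul]
  congr 1
  funext t
  simp only [id]
  ring

lemma beckerEnergy_sub_sub_eq_sum (G : ℝ) {U X : Matrix (Fin 3) (Fin 3) ℝ}
    (hU : U.IsHermitian) (hX : X.IsHermitian) :
    beckerEnergy G X - beckerEnergy G U - 2 * G * (matLog U * (X - U)).trace =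
      2 * G * ∑ i, ∑ j, hU.eigenOverlap hX i j *
        (hX.eigenvalues j * Real.log (hX.eigenvalues j) - hX.eigenvalues j
          - (hU.eigenvalues i * Real.log (hU.eigenvalues i) - hU.eigenvalues i)
          - Real.log (hU.eigenvalues i) * (hX.eigenvalues j - hU.eigenvalues i)) := by
  have h := hU.trace_cfc_bregman_eq_sum hX (fun t => t * Real.log t - t) Real.log
  rw [beckerEnergy, beckerEnergy, mul_matLog_sub_one_eq_cfc hX, mul_matLog_sub_one_eq_cfc hU,
    matLog_eq_cfc hU, ← h]
  ring

lemma abs_beckerEnergy_sub_sub_le (G : ℝ) {U X : Matrix (Fin 3) (Fin 3) ℝ}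
    (hU : U.PosDef) (hX : X.PosDef) {c : ℝ} (hc : 0 < c) (hcU : ∀ i, c ≤ hU.1.eigenvalues i) :
    |beckerEnergy G X - beckerEnergy G U - 2 * G * (matLog U * (X - U)).trace| ≤
      2 * |G| / c * ‖X - U‖ ^ 2 := by
  have hlam := hU.eigenvalues_pos
  have hmu := hX.eigenvalues_pos
  have hw := hU.1.eigenOverlap_nonneg hX.1
  rw [beckerEnergy_sub_sub_eq_sum G hU.1 hX.1, hU.1.frobenius_norm_sub_sq_eq_sum hX.1,
    abs_mul, abs_mul, abs_two, abs_of_nonneg (Finset.sum_nonneg fun i _ => Finset.sum_nonneg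
      fun j _ => mul_nonneg (hw i j) (bregman_mul_log_nonneg (hlam i) (hmu j))),
    div_mul_eq_mul_div, mul_div_assoc]
  refine mul_le_mul_of_nonneg_left ?_ (by positivity)
  simp only [Finset.sum_div, mul_div_assoc]
  refine Finset.sum_le_sum fun i _ => Finset.sum_le_sum fun j _ => ?_
  exact mul_le_mul_of_nonneg_left ((bregman_mul_log_le (hlam i) (hmu j)).trans
    (div_le_div_of_nonneg_left (sq_nonneg _) hc (hcU i))) (hw i j)

lemma beckerEnergy_sub_sub_isBigO (G : ℝ) {U : Matrix (Fin 3) (Fin 3) ℝ} (hU : U.PosDef) :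
    (fun X => beckerEnergy G X - beckerEnergy G U - 2 * G * (matLog U * (X - U)).trace)
      =O[𝓝[{X | X.PosDef}] U] fun X => ‖X - U‖ ^ 2 := by
  obtain ⟨i₀, hi₀⟩ := Finite.exists_min hU.1.eigenvalues
  refine .of_bound (2 * |G| / hU.1.eigenvalues i₀) (eventually_mem_nhdsWithin.mono fun X hX => ?_)
  rw [Real.norm_eq_abs, norm_pow, norm_norm]
  exact abs_beckerEnergy_sub_sub_le G hU hX (hU.eigenvalues_pos i₀) hi₀

/-- For fixed `G` and positive definite `U`, the Becker energy
`W(X) = 2G·(tr(X·(log X − 1)) + 3)`, as a function on symmetric positive definite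
matrices, is Fréchet differentiable at `U` with derivative `H ↦ 2G·tr(log(U)·H)`
(so the Biot stress `2G·log U` is the gradient of `W`), and `W(1) = 0`. -/
theorem becker_energy_hyperelastic (G : ℝ)
    (U : Matrix (Fin 3) (Fin 3) ℝ) (hU : U.PosDef) :
    (∃ L : Matrix (Fin 3) (Fin 3) ℝ →L[ℝ] ℝ,
      (∀ H : Matrix (Fin 3) (Fin 3) ℝ, L H = (2 * G) * (matLog U * H).trace) ∧
      HasFDerivWithinAt (beckerEnergy G) L
        {X : Matrix (Fin 3) (Fin 3) ℝ | X.PosDef} U)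
    ∧ beckerEnergy G 1 = 0 := by
  let L : Matrix (Fin 3) (Fin 3) ℝ →L[ℝ] ℝ := LinearMap.toContinuousLinearMap
    ((2 * G) • (traceLinearMap (Fin 3) ℝ ℝ ∘ₗ LinearMap.mulLeft ℝ (matLog U)))
  refine ⟨⟨L, fun H => rfl, ?_⟩, beckerEnergy_one G⟩
  have hquadratic := beckerEnergy_sub_sub_isBigO G hU
  exact hasFDerivWithinAt_iff_isLittleO.2 <| hquadratic.trans_isLittleO
    ((Asymptotics.isLittleO_pow_sub_sub U one_lt_two).mono nhdsWithin_le_nhds)
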